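/- arXiv:1511.03554 — 3 statements merged into one kernel-verified Lean document; each statement's English description precedes it below -/
import Mathlib

section
/- Let d ≥ 1 and m = binomial(d,2). For every map c : ℝ^d → S^d whose entries are homogeneous polynomials of degree 2 and which satisfies c(x) x = 0 for all x ∈ ℝ^d, there exists a symmetric m×m matrix H = (h_{pq}) such that c(x) = Σ_{p,q=1}^m h_{pq} D_p x x^⊤ D_q^⊤ for all x ∈ ℝ^d. That is, C = { c_H : H ∈ S^m }. -/
open Matrix

/-- The index set of pairs `(i,j)` with `i < j`; it has cardinality `d.choose 2`
and corresponds to the lexicographic enumeration `D_1, …, D_m` used in the paper. -/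
abbrev PairIdx (d : ℕ) := {p : Fin d × Fin d // p.1 < p.2}

/-- The elementary skew-symmetric matrix `S_{ij} = e_i e_jᵀ - e_j e_iᵀ`. -/
noncomputable def skewBasis {d : ℕ} (p : PairIdx d) : Matrix (Fin d) (Fin d) ℝ :=
  Matrix.single p.1.1 p.1.2 1 - Matrix.single p.1.2 p.1.1 1

/-- `c_H(x) = ∑_{p,q} h_{pq} D_p x xᵀ D_qᵀ`. -/
noncomputable def cH {d : ℕ} (H : Matrix (PairIdx d) (PairIdx d) ℝ) (x : Fin d → ℝ) :
    Matrix (Fin d) (Fin d) ℝ :=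
  ∑ p : PairIdx d, ∑ q : PairIdx d,
    H p q • (skewBasis p * Matrix.vecMulVec x x * (skewBasis q)ᵀ)

/-- A function `ℝ^d → ℝ` is (the evaluation of) a homogeneous polynomial of degree `k`. -/
def IsHomPolyFun (d k : ℕ) (f : (Fin d → ℝ) → ℝ) : Prop :=
  ∃ P : MvPolynomial (Fin d) ℝ, P.IsHomogeneous k ∧ ∀ x, f x = MvPolynomial.eval x P

/-!
Each entry of `c` is a quadratic form, `c(x)_{ij} = ∑ T_{ijkl} x_k x_l` with `T` symmetric in
`(i,j)` and in `(k,l)`, and polarizing the cubic identity `c(x) x = 0` gives the cyclic identity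
`T_{ijkl} + T_{ikjl} + T_{iljk} = 0`. Such a `T` has the pair symmetry `T_{abce} = T_{ceab}` and is
the symmetrization `R_{ikjl} + R_{iljk} = 2 T_{ijkl}` of `R_{abce} = (2/3)(T_{acbe} - T_{bcae})`,
which, like an algebraic curvature tensor, is antisymmetric in each pair and symmetric under
exchanging them. Take `H_{pq} = R_{pq}` on pairs `p = (a,b)`, `q = (c,e)` with `a < b`, `c < e`:
since `∑_{a<b} W_{ab} S_{ab} = W` for every skew `W`, one gets
`c_H(x)_{ij} = ∑ R_{ikjl} x_k x_l = c(x)_{ij}`.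
-/

open Finset

section QuadraticForm

variable {n : Type*}

lemma dotProduct_transpose_mulVec_self [Fintype n] {R : Type*} [CommSemiring R]
    (A : Matrix n n R) (x : n → R) :
    x ⬝ᵥ Aᵀ *ᵥ x = x ⬝ᵥ A *ᵥ x := by
  rw [dotProduct_mulVec, vecMul_transpose, dotProduct_comm]

lemma dotProduct_mulVec_self_eq_of_add_transpose [Fintype n] {A B : Matrix n n ℝ}
    (h : A + Aᵀ = (2 : ℝ) • B) (x : n → ℝ) : x ⬝ᵥ A *ᵥ x = x ⬝ᵥ B *ᵥ x := by
  have h2 := congrArg (fun M => x ⬝ᵥ M *ᵥ x) h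
  simp only [add_mulVec, dotProduct_add, dotProduct_transpose_mulVec_self, smul_mulVec,
    dotProduct_smul, smul_eq_mul] at h2
  linarith

noncomputable def polarMatrix [DecidableEq n] (f : (n → ℝ) → ℝ) : Matrix n n ℝ :=
  of fun k l => (f (Pi.single k 1 + Pi.single l 1) - f (Pi.single k 1) - f (Pi.single l 1)) / 2

lemma polarMatrix_apply_comm [DecidableEq n] (f : (n → ℝ) → ℝ) (k l : n) :
    polarMatrix f l k = polarMatrix f k l := by
  simp only [polarMatrix, of_apply, add_comm (Pi.single l (1 : ℝ) : n → ℝ)]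
  ring

lemma add_transpose_eq_two_smul_polarMatrix [Fintype n] [DecidableEq n] {f : (n → ℝ) → ℝ}
    {Q : Matrix n n ℝ} (hf : ∀ x, f x = x ⬝ᵥ Q *ᵥ x) : Q + Qᵀ = (2 : ℝ) • polarMatrix f := by
  ext k l
  simp only [Matrix.add_apply, transpose_apply, Matrix.smul_apply, polarMatrix, of_apply, hf,
    mulVec_add, dotProduct_add, add_dotProduct, mulVec_single_one, single_dotProduct, col_apply,
    one_mul, smul_eq_mul]
  ring

lemma eq_dotProduct_polarMatrix_mulVec [Fintype n] [DecidableEq n] {f : (n → ℝ) → ℝ}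
    {Q : Matrix n n ℝ} (hf : ∀ x, f x = x ⬝ᵥ Q *ᵥ x) (x : n → ℝ) :
    f x = x ⬝ᵥ polarMatrix f *ᵥ x :=
  (hf x).trans <|
    dotProduct_mulVec_self_eq_of_add_transpose (add_transpose_eq_two_smul_polarMatrix hf) x

end QuadraticForm

lemma Finsupp.exists_eq_single_add_single_of_degree_eq_two {σ : Type*} {s : σ →₀ ℕ}
    (h : s.degree = 2) : ∃ a b, s = single a 1 + single b 1 := by
  classical
  obtain ⟨a, b, hab⟩ := Multiset.card_eq_two.mp (s.card_toMultiset.trans h)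
  refine ⟨a, b, ?_⟩
  rw [← s.toMultiset_toFinsupp, hab, Multiset.insert_eq_cons, ← Multiset.singleton_add,
    Multiset.toFinsupp_add, Multiset.toFinsupp_singleton, Multiset.toFinsupp_singleton]

lemma exists_dotProduct_mulVec_eq_eval_monomial {n : Type*} [Fintype n] [DecidableEq n]
    {s : n →₀ ℕ} (hs : s.degree = 2) :
    ∃ Q : Matrix n n ℝ, ∀ x, MvPolynomial.eval x (MvPolynomial.monomial s 1) = x ⬝ᵥ Q *ᵥ x := by
  obtain ⟨a, b, rfl⟩ := Finsupp.exists_eq_single_add_single_of_degree_eq_two hs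
  refine ⟨single a b 1, fun x => ?_⟩
  simp [MvPolynomial.eval_monomial, Finsupp.prod_add_index, pow_add, mulVec, dotProduct,
    single_apply, ite_and]

lemma IsHomPolyFun.exists_dotProduct_mulVec {d : ℕ} {f : (Fin d → ℝ) → ℝ}
    (hf : IsHomPolyFun d 2 f) : ∃ Q : Matrix (Fin d) (Fin d) ℝ, ∀ x, f x = x ⬝ᵥ Q *ᵥ x := by
  obtain ⟨P, hP, hfP⟩ := hf
  have hmon (s : P.support) : ∃ Q : Matrix (Fin d) (Fin d) ℝ,
      ∀ x, MvPolynomial.eval x (MvPolynomial.monomial s.1 1) = x ⬝ᵥ Q *ᵥ x :=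
    exists_dotProduct_mulVec_eq_eval_monomial <| by
      by_contra h
      exact MvPolynomial.mem_support_iff.mp s.2 (hP.coeff_eq_zero h)
  choose Q hQ using hmon
  refine ⟨∑ s : P.support, MvPolynomial.coeff s P • Q s, fun x => ?_⟩
  conv_lhs => rw [hfP, P.as_sum]
  rw [map_sum, ← Finset.sum_coe_sort]
  simp [sum_mulVec, dotProduct_sum, smul_mulVec, ← hQ, MvPolynomial.eval_monomial]

lemma sum_perm_eq_zero_of_diag_eq_zero {V R : Type*} [Add V] [CommRing R]
    (τ : V → V → V → R)
    (hadd₁ : ∀ u u' v w, τ (u + u') v w = τ u v w + τ u' v w)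
    (hadd₂ : ∀ u v v' w, τ u (v + v') w = τ u v w + τ u v' w)
    (hadd₃ : ∀ u v w w', τ u v (w + w') = τ u v w + τ u v w')
    (hdiag : ∀ x, τ x x x = 0) (u v w : V) :
    τ u v w + τ u w v + τ v u w + τ v w u + τ w u v + τ w v u = 0 := by
  have huvw := hdiag (u + v + w)
  have huv := hdiag (u + v)
  have huw := hdiag (u + w)
  have hvw := hdiag (v + w)
  simp only [hadd₁, hadd₂, hadd₃] at huvw huv huw hvw
  linear_combination huvw - huv - huw - hvw + hdiag u + hdiag v + hdiag w

lemma sum_perm_eq_zero_of_cubic_eq_zero {n : Type*} [Fintype n] [DecidableEq n]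
    (S : n → Matrix n n ℝ) (h : ∀ x, ∑ a, x a * (x ⬝ᵥ S a *ᵥ x) = 0) (j k l : n) :
    S j k l + S j l k + S k j l + S k l j + S l j k + S l k j = 0 := by
  simpa [Pi.single_apply, mulVec_single_one] using
    sum_perm_eq_zero_of_diag_eq_zero (fun u v w => ∑ a, u a * (v ⬝ᵥ S a *ᵥ w))
      (fun _ _ _ _ => by simp only [Pi.add_apply, add_mul, sum_add_distrib])
      (fun _ _ _ _ => by simp only [add_dotProduct, mul_add, sum_add_distrib])
      (fun _ _ _ _ => by simp only [mulVec_add, dotProduct_add, mul_add, sum_add_distrib])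
      h (Pi.single j 1) (Pi.single k 1) (Pi.single l 1)

section Tensor

variable {ι : Type*}

structure IsSymmCyclic (T : ι → ι → ι → ι → ℝ) : Prop where
  symm_left : ∀ i j k l, T j i k l = T i j k l
  symm_right : ∀ i j k l, T i j l k = T i j k l
  cyclic : ∀ i j k l, T i j k l + T i k j l + T i l j k = 0

noncomputable def curvatureOf (T : ι → ι → ι → ι → ℝ) (a b c e : ι) : ℝ :=
  (2 / 3) * (T a c b e - T b c a e)

lemma curvatureOf_antisymm_left (T : ι → ι → ι → ι → ℝ) (a b c e : ι) :
    curvatureOf T b a c e = -curvatureOf T a b c e := by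
  simp only [curvatureOf]; ring

namespace IsSymmCyclic

variable {T : ι → ι → ι → ι → ℝ}

/-- The cyclic identities at `a` and `b` minus those at `c` and `e` leave
`2 (T a b c e - T c e a b)`. -/
lemma pair_symm (hT : IsSymmCyclic T) (a b c e : ι) : T c e a b = T a b c e := by
  linarith [hT.cyclic a b c e, hT.cyclic b a c e, hT.cyclic c a b e, hT.cyclic e a b c,
    hT.symm_left a b c e, hT.symm_left a c b e, hT.symm_left a e b c, hT.symm_left b e a c,
    hT.symm_left b c a e, hT.symm_left c e a b]

lemma curvatureOf_antisymm_right (hT : IsSymmCyclic T) (a b c e : ι) :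
    curvatureOf T a b e c = -curvatureOf T a b c e := by
  simp only [curvatureOf]
  linarith [hT.cyclic a b c e, hT.cyclic b a c e, hT.symm_left a b c e]

lemma curvatureOf_pair_symm (hT : IsSymmCyclic T) (a b c e : ι) :
    curvatureOf T c e a b = curvatureOf T a b c e := by
  simp only [curvatureOf]
  linarith [hT.symm_left a c e b, hT.symm_right a c b e, hT.symm_left a e c b,
    hT.symm_right a e b c, hT.pair_symm b c a e]

lemma curvatureOf_add (hT : IsSymmCyclic T) (i j k l : ι) :
    curvatureOf T i k j l + curvatureOf T i l j k = 2 * T i j k l := by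
  simp only [curvatureOf]
  linarith [hT.cyclic j i k l, hT.symm_left i j k l, hT.symm_left j k i l,
    hT.symm_left j l i k, hT.symm_right i j k l]

end IsSymmCyclic

end Tensor

section SkewBasis

variable {d : ℕ}

lemma skewBasis_mul_vecMulVec_mul_transpose (p q : PairIdx d) (x : Fin d → ℝ) :
    skewBasis p * vecMulVec x x * (skewBasis q)ᵀ
      = vecMulVec (skewBasis p *ᵥ x) (skewBasis q *ᵥ x) := by
  rw [mul_vecMulVec, vecMulVec_mul, vecMul_transpose]

lemma sum_pairIdx_eq_sum_filter {M : Type*} [AddCommMonoid M] (g : Fin d × Fin d → M) :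
    ∑ p : PairIdx d, g p.1 = ∑ q with q.1 < q.2, g q :=
  (Finset.sum_subtype _ (by simp) g).symm

lemma sum_smul_skewBasis {W : Matrix (Fin d) (Fin d) ℝ} (hW : ∀ a b, W b a = -W a b) :
    ∑ p : PairIdx d, W p.1.1 p.1.2 • skewBasis p = W := by
  ext u v
  have hentry (p : PairIdx d) : (W p.1.1 p.1.2 • skewBasis p) u v
      = (if p.1 = (u, v) then W u v else 0) - (if p.1 = (v, u) then W v u else 0) := by
    obtain ⟨⟨a, b⟩, _⟩ := p
    simp only [skewBasis, Matrix.smul_apply, Matrix.sub_apply, single_apply, Prod.mk.injEq,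
      smul_eq_mul]
    split_ifs <;> grind
  rw [Matrix.sum_apply, sum_congr rfl fun p _ => hentry p, sum_pairIdx_eq_sum_filter fun q =>
    (if q = (u, v) then W u v else 0) - (if q = (v, u) then W v u else 0)]
  simp only [sum_sub_distrib, sum_ite_eq', mem_filter, mem_univ, true_and]
  rcases lt_trichotomy u v with h | rfl | h
  · simp [h, h.not_gt]
  · simp only [lt_irrefl, if_false, sub_zero]
    linarith [hW u u]
  · simp [h, h.not_gt, hW v u]

lemma sum_mul_skewBasis_mulVec {W : Matrix (Fin d) (Fin d) ℝ} (hW : ∀ a b, W b a = -W a b)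
    (x : Fin d → ℝ) (i : Fin d) :
    ∑ p : PairIdx d, W p.1.1 p.1.2 * (skewBasis p *ᵥ x) i = (W *ᵥ x) i := by
  conv_rhs => rw [← sum_smul_skewBasis hW]
  simp [sum_mulVec, smul_mulVec]

def pairMatrix (R : Fin d → Fin d → Fin d → Fin d → ℝ) : Matrix (PairIdx d) (PairIdx d) ℝ :=
  of fun p q => R p.1.1 p.1.2 q.1.1 q.1.2

lemma cH_pairMatrix_apply {R : Fin d → Fin d → Fin d → Fin d → ℝ}
    (hR₁ : ∀ a b c e, R b a c e = -R a b c e) (hR₂ : ∀ a b c e, R a b e c = -R a b c e)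
    (x : Fin d → ℝ) (i j : Fin d) :
    cH (pairMatrix R) x i j = x ⬝ᵥ (of fun k l => R i k j l) *ᵥ x := by
  let V : Matrix (Fin d) (Fin d) ℝ := of fun a b => (of (R a b) *ᵥ x) j
  have hV (a b : Fin d) : V b a = -V a b := by
    simp only [V, mulVec, dotProduct, of_apply, hR₁ a b, neg_mul, sum_neg_distrib]
  calc cH (pairMatrix R) x i j
      = ∑ p : PairIdx d, ∑ q : PairIdx d,
          R p.1.1 p.1.2 q.1.1 q.1.2 * ((skewBasis p *ᵥ x) i * (skewBasis q *ᵥ x) j) := by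
        simp only [cH, skewBasis_mul_vecMulVec_mul_transpose, Matrix.sum_apply,
          Matrix.smul_apply, vecMulVec_apply, pairMatrix, of_apply, smul_eq_mul]
    _ = ∑ p : PairIdx d, V p.1.1 p.1.2 * (skewBasis p *ᵥ x) i := by
        refine sum_congr rfl fun p _ => ?_
        simp only [V, of_apply]
        rw [← sum_mul_skewBasis_mulVec (W := of (R p.1.1 p.1.2)) (hR₂ p.1.1 p.1.2) x j, sum_mul]
        exact sum_congr rfl fun q _ => by rw [of_apply]; ring
    _ = (V *ᵥ x) i := sum_mul_skewBasis_mulVec hV x i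
    _ = x ⬝ᵥ (of fun k l => R i k j l) *ᵥ x := by
        simp only [V, mulVec, dotProduct, of_apply]
        exact sum_congr rfl fun k _ => mul_comm _ _

end SkewBasis

theorem stmt2_general (d : ℕ)
    (c : (Fin d → ℝ) → Matrix (Fin d) (Fin d) ℝ)
    (hsymm : ∀ x, (c x).IsSymm)
    (hhom : ∀ i j, IsHomPolyFun d 2 (fun x => c x i j))
    (hker : ∀ x, (c x).mulVec x = 0) :
    ∃ H : Matrix (PairIdx d) (PairIdx d) ℝ, H.IsSymm ∧ ∀ x, c x = cH H x := by
  let T (i j : Fin d) : Matrix (Fin d) (Fin d) ℝ := polarMatrix fun x => c x i j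
  have hrep (x : Fin d → ℝ) (i j : Fin d) : c x i j = x ⬝ᵥ T i j *ᵥ x :=
    have ⟨_, hQ⟩ := (hhom i j).exists_dotProduct_mulVec
    eq_dotProduct_polarMatrix_mulVec hQ x
  have hT : IsSymmCyclic T := by
    have symm_right (i j k l : Fin d) : T i j l k = T i j k l := polarMatrix_apply_comm _ k l
    refine ⟨fun i j k l => by simp only [T, polarMatrix, of_apply, (hsymm _).apply i j],
      symm_right, fun i j k l => ?_⟩
    have hcubic (x : Fin d → ℝ) : ∑ a, x a * (x ⬝ᵥ T i a *ᵥ x) = 0 := by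
      simpa [mulVec, dotProduct, hrep, mul_comm] using congrFun (hker x) i
    linarith [sum_perm_eq_zero_of_cubic_eq_zero (T i) hcubic j k l, symm_right i j k l,
      symm_right i k j l, symm_right i l j k]
  refine ⟨pairMatrix (curvatureOf T),
    IsSymm.ext fun p q => hT.curvatureOf_pair_symm _ _ _ _, fun x => ?_⟩
  ext i j
  rw [hrep, cH_pairMatrix_apply (curvatureOf_antisymm_left _) hT.curvatureOf_antisymm_right]
  refine (dotProduct_mulVec_self_eq_of_add_transpose ?_ x).symm
  ext k l
  simp [hT.curvatureOf_add]

/-- Every `c : ℝ^d → S^d` with homogeneous degree-2 polynomial entries and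
`c(x) x = 0` for all `x` is of the form `c_H` for some symmetric matrix `H`, i.e.
`C = { c_H : H ∈ S^m }` with `m = choose d 2`. -/
theorem stmt2 (d : ℕ) (hd : 1 ≤ d)
    (c : (Fin d → ℝ) → Matrix (Fin d) (Fin d) ℝ)
    (hsymm : ∀ x, (c x).IsSymm)
    (hhom : ∀ i j, IsHomPolyFun d 2 (fun x => c x i j))
    (hker : ∀ x, (c x).mulVec x = 0) :
    ∃ H : Matrix (PairIdx d) (PairIdx d) ℝ, H.IsSymm ∧ ∀ x, c x = cH H x :=
  stmt2_general d c hsymm hhom hker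
end

section
/- Let d ≥ 6. There exists a nonnegative biquadratic form in d+d variables vanishing on the diagonal that is not a sum of squares of polynomials. Equivalently, there exists a map c : ℝ^d → S^d with homogeneous degree-2 polynomial entries such that c(x) is positive semidefinite for all x and c(x)x = 0 for all x, yet c admits no representation c(x) = Σ_p A_p x x^⊤ A_p^⊤ with finitely many skew-symmetric matrices A_p ∈ ℝ^{d×d}. -/
open Matrix

/-!
Write `x = (p, q)` and `y = (r, s)` with `p, q, r, s ∈ ℝ³` read as pure quaternions. The
biquadratic form `2 (|q|²|r|² + |p|²|s|²) - 4 ⟪p q, r s⟫` is nonnegative by Cauchy–Schwarz,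
`|p q| = |p| |q|` and AM–GM, and it vanishes on the diagonal; `c(x)` is its matrix in `y`, padded
by zeros when `d > 6`. If it were `∑ (yᵀ A x)²` with skew `A`'s, every `yᵀ A x` would vanish on the
zeros of the form. Pairs inside one block and pairs such as `x = (i, j)`, `y = (-j, i)` (where
`i j = k = (-j) i`) are zeros, and with skew-symmetry they force the coefficient of `p₀ s₀` in
`yᵀ A x` to vanish, whereas the form equals 2 at `x = (i, 0)`, `y = (0, i)`.
-/

open Quaternion

section HomPolyFun

variable {d k l : ℕ} {f g : (Fin d → ℝ) → ℝ}

theorem IsHomPolyFun.add (hf : IsHomPolyFun d k f) (hg : IsHomPolyFun d k g) :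
    IsHomPolyFun d k (fun x => f x + g x) := by
  obtain ⟨P, hP, hfP⟩ := hf
  obtain ⟨Q, hQ, hgQ⟩ := hg
  exact ⟨P + Q, hP.add hQ, fun x => by simp [hfP, hgQ]⟩

theorem IsHomPolyFun.sub (hf : IsHomPolyFun d k f) (hg : IsHomPolyFun d k g) :
    IsHomPolyFun d k (fun x => f x - g x) := by
  obtain ⟨P, hP, hfP⟩ := hf
  obtain ⟨Q, hQ, hgQ⟩ := hg
  exact ⟨P - Q, hP.sub hQ, fun x => by simp [hfP, hgQ]⟩

theorem IsHomPolyFun.mul (hf : IsHomPolyFun d k f) (hg : IsHomPolyFun d l g) :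
    IsHomPolyFun d (k + l) (fun x => f x * g x) := by
  obtain ⟨P, hP, hfP⟩ := hf
  obtain ⟨Q, hQ, hgQ⟩ := hg
  exact ⟨P * Q, hP.mul hQ, fun x => by simp [hfP, hgQ]⟩

theorem IsHomPolyFun.const_mul (a : ℝ) (hf : IsHomPolyFun d k f) :
    IsHomPolyFun d k (fun x => a * f x) := by
  obtain ⟨P, hP, hfP⟩ := hf
  exact ⟨MvPolynomial.C a * P, hP.C_mul a, fun x => by simp [hfP]⟩

theorem IsHomPolyFun.mul_const (a : ℝ) (hf : IsHomPolyFun d k f) :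
    IsHomPolyFun d k (fun x => f x * a) := by
  simpa only [mul_comm] using hf.const_mul a

theorem IsHomPolyFun.sum {ι : Type*} (s : Finset ι) {f : ι → (Fin d → ℝ) → ℝ}
    (hf : ∀ i, IsHomPolyFun d k (f i)) : IsHomPolyFun d k (fun x => ∑ i ∈ s, f i x) := by
  choose P hP hfP using hf
  exact ⟨∑ i ∈ s, P i, .sum _ _ _ fun i _ => hP i, fun x => by simp [hfP]⟩

theorem isHomPolyFun_apply (i : Fin d) : IsHomPolyFun d 1 (fun x => x i) :=
  ⟨MvPolynomial.X i, MvPolynomial.isHomogeneous_X ℝ i, fun x => by simp⟩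

theorem isHomPolyFun_mulVec_apply {m : Type*} (P : Matrix m (Fin d) ℝ) (a : m) :
    IsHomPolyFun d 1 (fun x => (P *ᵥ x) a) :=
  show IsHomPolyFun d 1 (fun x => ∑ i, P a i * x i) from
    IsHomPolyFun.sum _ fun i => (isHomPolyFun_apply i).const_mul (P a i)

theorem isHomPolyFun_dotProduct {m : Type*} [Fintype m] {u v : (Fin d → ℝ) → m → ℝ}
    (hu : ∀ a, IsHomPolyFun d 1 (fun x => u x a)) (hv : ∀ a, IsHomPolyFun d 1 (fun x => v x a)) :
    IsHomPolyFun d 2 (fun x => u x ⬝ᵥ v x) :=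
  IsHomPolyFun.sum _ fun a => (hu a).mul (hv a)

theorem isHomPolyFun_mul_mul_apply {m n : Type*} [Fintype m]
    (L : Matrix n m ℝ) (R : Matrix m n ℝ) {M : (Fin d → ℝ) → Matrix m m ℝ}
    (hM : ∀ a b, IsHomPolyFun d k (fun x => M x a b)) (i j : n) :
    IsHomPolyFun d k (fun x => (L * M x * R) i j) := by
  simp only [mul_apply]
  exact IsHomPolyFun.sum _ fun b =>
    (IsHomPolyFun.sum _ fun a => (hM a b).const_mul (L i a)).mul_const (R b j)

end HomPolyFun

theorem two_mul_inner_mul_mul_le {A : Type*} [NormedRing A] [InnerProductSpace ℝ A]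
    (a b c e : A) :
    2 * inner ℝ (a * b) (c * e) ≤ ‖b‖ ^ 2 * ‖c‖ ^ 2 + ‖a‖ ^ 2 * ‖e‖ ^ 2 := by
  have hCS : ‖a * b‖ * ‖c * e‖ ≤ (‖b‖ * ‖c‖) * (‖a‖ * ‖e‖) := by
    calc ‖a * b‖ * ‖c * e‖ ≤ (‖a‖ * ‖b‖) * (‖c‖ * ‖e‖) :=
          mul_le_mul (norm_mul_le a b) (norm_mul_le c e) (norm_nonneg _) (by positivity)
      _ = _ := by ring
  nlinarith [real_inner_le_norm (a * b) (c * e), sq_nonneg (‖b‖ * ‖c‖ - ‖a‖ * ‖e‖)]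

def pureQuat (p : Fin 3 → ℝ) : ℍ[ℝ] := ⟨0, p 0, p 1, p 2⟩

theorem sq_norm_pureQuat (p : Fin 3 → ℝ) : ‖pureQuat p‖ ^ 2 = p ⬝ᵥ p := by
  rw [sq, ← normSq_eq_norm_mul_self, normSq_def']
  simp [pureQuat, dotProduct, Fin.sum_univ_three]
  ring

def quatMatrix (u : Fin 3 ⊕ Fin 3 → ℝ) : Matrix (Fin 3 ⊕ Fin 3) (Fin 3 ⊕ Fin 3) ℝ :=
  let p := u ∘ Sum.inl
  let q := u ∘ Sum.inr
  (2 : ℝ) • fromBlocks ((q ⬝ᵥ q) • 1) (vecMulVec q p - vecMulVec p q - (p ⬝ᵥ q) • 1)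
    (vecMulVec p q - vecMulVec q p - (p ⬝ᵥ q) • 1) ((p ⬝ᵥ p) • 1)

theorem dotProduct_quatMatrix_mulVec (u v : Fin 3 ⊕ Fin 3 → ℝ) :
    v ⬝ᵥ quatMatrix u *ᵥ v =
      2 * (‖pureQuat (u ∘ .inr)‖ ^ 2 * ‖pureQuat (v ∘ .inl)‖ ^ 2
        + ‖pureQuat (u ∘ .inl)‖ ^ 2 * ‖pureQuat (v ∘ .inr)‖ ^ 2)
      - 4 * inner ℝ (pureQuat (u ∘ .inl) * pureQuat (u ∘ .inr))
        (pureQuat (v ∘ .inl) * pureQuat (v ∘ .inr)) := by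
  simp only [sq_norm_pureQuat, inner_def, re_mul, imI_mul, imJ_mul, imK_mul, re_star, imI_star,
    imJ_star, imK_star]
  simp [pureQuat, quatMatrix, dotProduct, mulVec, fromBlocks, vecMulVec, Fin.sum_univ_three,
    Fintype.sum_sum_type, one_apply]
  ring

theorem posSemidef_quatMatrix (u : Fin 3 ⊕ Fin 3 → ℝ) : (quatMatrix u).PosSemidef := by
  refine .of_dotProduct_mulVec_nonneg ?_ fun v => ?_
  · refine isHermitian_iff_isSymm.mpr (IsSymm.smul (IsSymm.fromBlocks (isSymm_one.smul _) ?_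
      (isSymm_one.smul _)) _)
    simp [transpose_vecMulVec]
  · rw [star_trivial, dotProduct_quatMatrix_mulVec]
    linarith [two_mul_inner_mul_mul_le (pureQuat (u ∘ .inl)) (pureQuat (u ∘ .inr))
      (pureQuat (v ∘ .inl)) (pureQuat (v ∘ .inr))]

theorem quatMatrix_mulVec_self (u : Fin 3 ⊕ Fin 3 → ℝ) : quatMatrix u *ᵥ u = 0 := by
  refine ((posSemidef_quatMatrix u).dotProduct_mulVec_zero_iff u).mp ?_
  rw [star_trivial, dotProduct_quatMatrix_mulVec, real_inner_self_eq_norm_sq, norm_mul]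
  ring

theorem isHomPolyFun_quatMatrix_apply {d : ℕ} {u : (Fin d → ℝ) → Fin 3 ⊕ Fin 3 → ℝ}
    (hu : ∀ a, IsHomPolyFun d 1 (fun x => u x a)) (a b : Fin 3 ⊕ Fin 3) :
    IsHomPolyFun d 2 (fun x => quatMatrix (u x) a b) := by
  have hp (i : Fin 3) : IsHomPolyFun d 1 (fun x => (u x ∘ Sum.inl) i) := hu _
  have hq (i : Fin 3) : IsHomPolyFun d 1 (fun x => (u x ∘ Sum.inr) i) := hu _
  rcases a with i | i <;> rcases b with j | j <;>
    simp only [quatMatrix, Matrix.smul_apply, fromBlocks_apply₁₁, fromBlocks_apply₁₂,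
      fromBlocks_apply₂₁, fromBlocks_apply₂₂, Matrix.sub_apply, vecMulVec_apply, smul_eq_mul]
  · exact ((isHomPolyFun_dotProduct hq hq).mul_const _).const_mul 2
  · exact ((((hq i).mul (hp j)).sub ((hp i).mul (hq j))).sub
      ((isHomPolyFun_dotProduct hp hq).mul_const _)).const_mul 2
  · exact ((((hp i).mul (hq j)).sub ((hq i).mul (hp j))).sub
      ((isHomPolyFun_dotProduct hp hq).mul_const _)).const_mul 2
  · exact ((isHomPolyFun_dotProduct hp hp).mul_const _).const_mul 2

theorem apply_inr_zero_inl_zero_eq_zero (B : Matrix (Fin 3 ⊕ Fin 3) (Fin 3 ⊕ Fin 3) ℝ)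
    (hB : Bᵀ = -B) (h : ∀ u v, v ⬝ᵥ quatMatrix u *ᵥ v = 0 → v ⬝ᵥ B *ᵥ u = 0) :
    B (.inr 0) (.inl 0) = 0 := by
  have hskew (a b) : B a b = -B b a := by simpa using congrFun (congrFun hB b) a
  let e (a : Fin 3 ⊕ Fin 3) : Fin 3 ⊕ Fin 3 → ℝ := Pi.single a 1
  have h₁ := h (e (.inl 0)) (e (.inl 1)) ?_
  have h₂ := h (e (.inl 0)) (e (.inl 2)) ?_
  have h₃ := h (e (.inl 1)) (e (.inl 2)) ?_
  have h₄ := h (e (.inr 0)) (e (.inr 1)) ?_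
  have h₅ := h (e (.inr 0)) (e (.inr 2)) ?_
  have h₆ := h (e (.inr 1)) (e (.inr 2)) ?_
  -- zeros with `p q = r s` and `|q| |r| = |p| |s|`
  have h₇ := h (e (.inl 0) + e (.inr 1)) (e (.inr 0) - e (.inl 1)) ?_
  have h₈ := h (e (.inl 1) + e (.inr 2)) (e (.inr 1) - e (.inl 2)) ?_
  have h₉ := h (e (.inl 0) + e (.inr 2)) (e (.inr 0) - e (.inl 2)) ?_
  · simp only [e, mulVec_add, dotProduct_add, sub_dotProduct, mulVec_single_one, single_dotProduct,
      one_mul, col_apply] at h₁ h₂ h₃ h₄ h₅ h₆ h₇ h₈ h₉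
    linarith [hskew (.inr 0) (.inr 1), hskew (.inr 1) (.inr 2), hskew (.inr 0) (.inr 2),
      hskew (.inl 1) (.inr 1)]
  all_goals simp [e, quatMatrix, dotProduct, mulVec, fromBlocks, vecMulVec, Pi.single_apply]

theorem not_exists_skew_quatMatrix_eq_sum_sq {ι : Type*} [Fintype ι] :
    ¬ ∃ B : ι → Matrix (Fin 3 ⊕ Fin 3) (Fin 3 ⊕ Fin 3) ℝ, (∀ p, (B p)ᵀ = -B p) ∧
      ∀ u v, v ⬝ᵥ quatMatrix u *ᵥ v = ∑ p, (v ⬝ᵥ B p *ᵥ u) ^ 2 := by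
  rintro ⟨B, hskew, hsos⟩
  have hB : ∀ p, B p (.inr 0) (.inl 0) = 0 := fun p =>
    apply_inr_zero_inl_zero_eq_zero (B p) (hskew p) fun u v h0 => by
      have hsq := (Finset.sum_eq_zero_iff_of_nonneg fun q _ => sq_nonneg _).mp
        ((hsos u v).symm.trans h0) p (Finset.mem_univ p)
      exact pow_eq_zero_iff two_ne_zero |>.mp hsq
  have hval := hsos (Pi.single (.inl 0) 1) (Pi.single (.inr 0) 1)
  simp [hB, quatMatrix, dotProduct, mulVec, fromBlocks, vecMulVec, one_apply, Pi.single_apply]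
    at hval

section Compression

variable {R m n : Type*} [CommRing R] [Fintype m] [Fintype n]

theorem dotProduct_transpose_mul_mul_mulVec (P : Matrix m n R) (M : Matrix m m R) (x y : n → R) :
    y ⬝ᵥ (Pᵀ * M * P) *ᵥ x = (P *ᵥ y) ⬝ᵥ M *ᵥ (P *ᵥ x) := by
  rw [← mulVec_mulVec, ← mulVec_mulVec, dotProduct_mulVec, vecMul_transpose]

theorem dotProduct_mul_vecMulVec_mul_transpose_mulVec (A : Matrix n n R) (x y : n → R) :
    y ⬝ᵥ (A * vecMulVec x x * Aᵀ) *ᵥ y = (y ⬝ᵥ A *ᵥ x) ^ 2 := by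
  rw [mul_vecMulVec, vecMulVec_mul, vecMul_transpose, dotProduct_mulVec, vecMul_vecMulVec,
    smul_dotProduct, smul_eq_mul, dotProduct_comm, sq]

theorem sum_sq_of_transpose_mul_mul_eq [DecidableEq m] {ι : Type*} [Fintype ι] {P : Matrix m n R}
    (hP : P * Pᵀ = 1) {c : (m → R) → Matrix m m R} {A : ι → Matrix n n R}
    (h : ∀ x, Pᵀ * c (P *ᵥ x) * P = ∑ p, A p * vecMulVec x x * (A p)ᵀ) (u v : m → R) :
    v ⬝ᵥ c u *ᵥ v = ∑ p, (v ⬝ᵥ (P * A p * Pᵀ) *ᵥ u) ^ 2 := by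
  have hPP : ∀ w, P *ᵥ (Pᵀ *ᵥ w) = w := by simp [mulVec_mulVec, hP]
  have hform := congrArg (fun M => (Pᵀ *ᵥ v) ⬝ᵥ M *ᵥ (Pᵀ *ᵥ v)) (h (Pᵀ *ᵥ u))
  simp only [dotProduct_transpose_mul_mul_mulVec, hPP, sum_mulVec, dotProduct_sum,
    dotProduct_mul_vecMulVec_mul_transpose_mulVec] at hform
  rw [hform]
  congr! 2 with p
  simpa only [transpose_transpose] using (dotProduct_transpose_mul_mul_mulVec Pᵀ (A p) u v).symm

end Compression

theorem submatrix_one_mul_transpose_self {R m n : Type*} [CommRing R] [DecidableEq m] [Fintype n]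
    [DecidableEq n] {ι : m → n} (hι : ι.Injective) :
    (1 : Matrix n n R).submatrix ι id * ((1 : Matrix n n R).submatrix ι id)ᵀ = 1 := by
  rw [transpose_submatrix, transpose_one, ← submatrix_mul _ _ _ _ _ Function.bijective_id, one_mul,
    submatrix_one _ hι]

/-- For `d ≥ 6` there is a nonnegative biquadratic form in `d+d` variables
vanishing on the diagonal that is not a sum of squares: there exists `c : ℝ^d → S^d` with
homogeneous degree-2 polynomial entries, `c(x)` positive semidefinite for all `x` and
`c(x) x = 0` for all `x`, admitting no representation `c(x) = ∑_p A_p x xᵀ A_pᵀ` with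
finitely many skew-symmetric matrices `A_p`. -/
theorem stmt9 (d : ℕ) (hd : 6 ≤ d) :
    ∃ c : (Fin d → ℝ) → Matrix (Fin d) (Fin d) ℝ,
      (∀ x, (c x).IsSymm) ∧
      (∀ i j, IsHomPolyFun d 2 (fun x => c x i j)) ∧
      (∀ x, ∀ y : Fin d → ℝ, 0 ≤ y ⬝ᵥ (c x).mulVec y) ∧
      (∀ x, (c x).mulVec x = 0) ∧
      ¬ ∃ (n : ℕ) (A : Fin n → Matrix (Fin d) (Fin d) ℝ),
          (∀ p, (A p)ᵀ = -(A p)) ∧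
          ∀ x, c x = ∑ p, A p * Matrix.vecMulVec x x * (A p)ᵀ := by
  let ι : Fin 3 ⊕ Fin 3 ↪ Fin d := finSumFinEquiv.toEmbedding.trans (Fin.castLEEmb hd)
  let P : Matrix (Fin 3 ⊕ Fin 3) (Fin d) ℝ := (1 : Matrix (Fin d) (Fin d) ℝ).submatrix ι id
  have hP : P * Pᵀ = 1 := submatrix_one_mul_transpose_self ι.injective
  have hpsd (x : Fin d → ℝ) : (Pᵀ * quatMatrix (P *ᵥ x) * P).PosSemidef := by
    simpa using (posSemidef_quatMatrix (P *ᵥ x)).conjTranspose_mul_mul_same P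
  refine ⟨fun x => Pᵀ * quatMatrix (P *ᵥ x) * P, fun x => isHermitian_iff_isSymm.mp (hpsd x).1,
    isHomPolyFun_mul_mul_apply _ _ (isHomPolyFun_quatMatrix_apply (isHomPolyFun_mulVec_apply P)),
    fun x y => by simpa using (hpsd x).dotProduct_mulVec_nonneg y, fun x => ?_, ?_⟩
  · rw [← mulVec_mulVec, ← mulVec_mulVec, quatMatrix_mulVec_self, mulVec_zero]
  · rintro ⟨n, A, hA, hrep⟩
    refine not_exists_skew_quatMatrix_eq_sum_sq ⟨fun p => P * A p * Pᵀ, fun p => ?_,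
      sum_sq_of_transpose_mul_mul_eq hP hrep⟩
    simp [transpose_mul, hA, Matrix.mul_assoc]
end

section
/- Let d ≥ 1, m = binomial(d,2), and let A ∈ ℝ^{d×d} be a nonzero skew-symmetric matrix. Let z_A ∈ ℝ^m be the vector listing the strictly upper-triangular entries a_{ij} (i < j) of A in lexicographic order. Then A has rank 2 if and only if z_A^⊤ H z_A = 0 for every H ∈ K, where K = { H ∈ S^m : c_H(x) = 0 for all x ∈ ℝ^d }. -/
open Matrix

/-!
For `x, y ∈ ℝ^d` one has `yᵀ c_H(x) y = wᵀ H w`, where `w_p = yᵀ D_p x` are the upper-triangular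
coordinates of the skew matrix `y xᵀ - x yᵀ`. A skew matrix `A` of rank 2 has this form: if
`A_{ab} ≠ 0`, the columns `a` and `b` of `A` are independent, hence span its column space, and
solving for the coefficients gives `A = y xᵀ - x yᵀ` with `y = A_{a·} / A_{ab}` and `x = A_{b·}`.
So `z_A` is isotropic for every `H ∈ K`.

Conversely, the symmetrised quadratic form whose value at `z_A` is the Pfaffian
`A_{ab} A_{ce} - A_{ac} A_{be} + A_{ae} A_{bc}` lies in `K`. If all these Plücker relations hold
and `A_{ab} ≠ 0`, the same formula `A = y xᵀ - x yᵀ` follows, so `rank A ≤ 2`, while the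
independence of the columns `a` and `b` gives `rank A ≥ 2`.
-/

section SkewRank

variable {K n : Type*} [Field K] {A : Matrix n n K}

lemma apply_swap_of_transpose_eq_neg (hA : Aᵀ = -A) (i j : n) : A j i = -A i j := by
  simpa using congrFun (congrFun hA i) j

lemma apply_self_of_transpose_eq_neg [CharZero K] (hA : Aᵀ = -A) (i : n) : A i i = 0 := by
  have := apply_swap_of_transpose_eq_neg hA i i
  linear_combination (1 / 2 : K) * this

lemma linearIndependent_col_pair [CharZero K] (hA : Aᵀ = -A) {a b : n} (hab : A a b ≠ 0) :
    LinearIndependent K ![A.col a, A.col b] := by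
  rw [LinearIndependent.pair_iff]
  intro s t hst
  have ha := congrFun hst a
  have hb := congrFun hst b
  simp only [Pi.add_apply, Pi.smul_apply, col_apply, smul_eq_mul, Pi.zero_apply,
    apply_self_of_transpose_eq_neg hA, apply_swap_of_transpose_eq_neg hA a b] at ha hb
  exact ⟨by simpa [hab] using hb, by simpa [hab] using ha⟩

lemma span_col_pair_le (a b : n) :
    Submodule.span K (Set.range ![A.col a, A.col b]) ≤ Submodule.span K (Set.range A.col) := by
  refine Submodule.span_mono (Set.range_subset_iff.2 fun i => ?_)
  fin_cases i <;> simp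

lemma eq_vecMulVec_sub_of_mul_apply_eq {a b : n} (hab : A a b ≠ 0)
    (h : ∀ k l, A a b * A k l = A a k * A b l - A b k * A a l) :
    A = vecMulVec ((A a b)⁻¹ • A a) (A b) - vecMulVec (A b) ((A a b)⁻¹ • A a) := by
  ext k l
  simp only [Matrix.sub_apply, vecMulVec_apply, Pi.smul_apply, smul_eq_mul]
  field_simp
  linear_combination h k l

variable [Fintype n]

lemma rank_vecMulVec_sub_le_two (u v : n → K) : (vecMulVec u v - vecMulVec v u).rank ≤ 2 := by
  rw [rank_eq_finrank_span_cols]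
  calc _ ≤ Module.finrank K (Submodule.span K (Set.range ![u, v])) := by
        refine Submodule.finrank_mono (Submodule.span_le.2 (Set.range_subset_iff.2 fun l => ?_))
        rw [SetLike.mem_coe, range_cons_cons_empty, Submodule.mem_span_pair]
        refine ⟨v l, -u l, funext fun k => ?_⟩
        simp only [neg_smul, Pi.add_apply, Pi.smul_apply, smul_eq_mul, Pi.neg_apply, col_apply,
          Matrix.sub_apply, vecMulVec_apply]
        ring
    _ ≤ 2 := (finrank_range_le_card ![u, v]).trans (by simp)

lemma two_le_rank_of_apply_ne_zero [CharZero K] (hA : Aᵀ = -A) {a b : n} (hab : A a b ≠ 0) :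
    2 ≤ A.rank := by
  rw [rank_eq_finrank_span_cols]
  simpa [finrank_span_eq_card (linearIndependent_col_pair hA hab)] using
    Submodule.finrank_mono (span_col_pair_le (A := A) a b)

lemma mul_apply_eq_of_rank_le_two [CharZero K] (hA : Aᵀ = -A) (hr : A.rank ≤ 2) {a b : n}
    (hab : A a b ≠ 0) (k l : n) : A a b * A k l = A a k * A b l - A b k * A a l := by
  have hspan : Submodule.span K (Set.range ![A.col a, A.col b])
      = Submodule.span K (Set.range A.col) := by
    refine Submodule.eq_of_le_of_finrank_le (span_col_pair_le a b) ?_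
    rw [← rank_eq_finrank_span_cols, finrank_span_eq_card (linearIndependent_col_pair hA hab)]
    simpa using hr
  have hl : A.col l ∈ Submodule.span K (Set.range ![A.col a, A.col b]) :=
    hspan ▸ Submodule.subset_span ⟨l, rfl⟩
  rw [range_cons_cons_empty, Submodule.mem_span_pair] at hl
  obtain ⟨α, β, hαβ⟩ := hl
  have hcol (r : n) : α * A r a + β * A r b = A r l := by simpa using congrFun hαβ r
  have hal := hcol a
  have hbl := hcol b
  have hkl := hcol k
  simp only [apply_self_of_transpose_eq_neg hA, apply_swap_of_transpose_eq_neg hA a b] at hal hbl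
  rw [apply_swap_of_transpose_eq_neg hA a k, apply_swap_of_transpose_eq_neg hA b k] at hkl
  linear_combination (-A a b) * hkl + A a k * hbl - A b k * hal

end SkewRank

section SymmVecMulVec

variable {ι : Type*}

def symmVecMulVec (f g : ι → ℝ) : Matrix ι ι ℝ := vecMulVec f g + vecMulVec g f

lemma symmVecMulVec_isSymm (f g : ι → ℝ) : (symmVecMulVec f g).IsSymm := by
  simp [symmVecMulVec, IsSymm, transpose_vecMulVec, add_comm]

variable [Fintype ι]

lemma dotProduct_mulVec_eq_sum (M : Matrix ι ι ℝ) (u w : ι → ℝ) :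
    u ⬝ᵥ M *ᵥ w = ∑ p, ∑ q, M p q * (u p * w q) := by
  simp only [dotProduct, mulVec, Finset.mul_sum]
  exact Finset.sum_congr rfl fun p _ => Finset.sum_congr rfl fun q _ => by ring

lemma dotProduct_symmVecMulVec_mulVec (f g u w : ι → ℝ) :
    u ⬝ᵥ symmVecMulVec f g *ᵥ w = (u ⬝ᵥ f) * (w ⬝ᵥ g) + (u ⬝ᵥ g) * (w ⬝ᵥ f) := by
  simp only [symmVecMulVec, add_mulVec, vecMulVec_mulVec, dotProduct_add, op_smul_eq_smul,
    dotProduct_smul, smul_eq_mul, dotProduct_comm _ w]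
  ring

end SymmVecMulVec

section SkewBasis

variable {d : ℕ}

noncomputable def skewBasisEntry (u v : Fin d) : PairIdx d → ℝ := fun p => skewBasis p u v

lemma skewBasis_apply (p : PairIdx d) (s t : Fin d) :
    skewBasis p s t = (if p.1 = (s, t) then 1 else 0) - (if p.1 = (t, s) then 1 else 0) := by
  simp [skewBasis, Matrix.single, Prod.ext_iff, and_comm]

lemma sum_mul_ite_val_eq (v : PairIdx d → ℝ) (s t : Fin d) :
    ∑ p : PairIdx d, v p * (if p.1 = (s, t) then 1 else 0)
      = if h : s < t then v ⟨(s, t), h⟩ else 0 := by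
  split_ifs with h
  · rw [Finset.sum_eq_single_of_mem ⟨(s, t), h⟩ (Finset.mem_univ _)]
    · simp
    · intro p _ hp
      rw [if_neg fun hpe => hp (Subtype.ext hpe), mul_zero]
  · refine Finset.sum_eq_zero fun p _ => ?_
    rw [if_neg fun hpe => h (by simpa [hpe] using p.2), mul_zero]

lemma dotProduct_skewBasisEntry_eq (v : PairIdx d → ℝ) (s t : Fin d) :
    v ⬝ᵥ skewBasisEntry s t
      = (if h : s < t then v ⟨(s, t), h⟩ else 0) - (if h : t < s then v ⟨(t, s), h⟩ else 0) := by
  simp only [dotProduct, skewBasisEntry, skewBasis_apply, mul_sub, Finset.sum_sub_distrib,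
    sum_mul_ite_val_eq]

lemma dotProduct_skewBasisEntry {A : Matrix (Fin d) (Fin d) ℝ} (hA : Aᵀ = -A) (s t : Fin d) :
    (fun p : PairIdx d => A p.1.1 p.1.2) ⬝ᵥ skewBasisEntry s t = A s t := by
  rw [dotProduct_skewBasisEntry_eq]
  rcases lt_trichotomy s t with h | rfl | h
  · simp [h, h.not_gt]
  · simp [apply_self_of_transpose_eq_neg hA]
  · simp [h, h.not_gt, apply_swap_of_transpose_eq_neg hA t s]

lemma skewBasis_mulVec_apply (p : PairIdx d) (x : Fin d → ℝ) (k : Fin d) :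
    (skewBasis p *ᵥ x) k
      = (if k = p.1.1 then x p.1.2 else 0) - (if k = p.1.2 then x p.1.1 else 0) := by
  simp [skewBasis, Matrix.sub_mulVec, Matrix.single_mulVec, Function.update_apply]

lemma dotProduct_skewBasis_mulVec (p : PairIdx d) (x y : Fin d → ℝ) :
    y ⬝ᵥ skewBasis p *ᵥ x = y p.1.1 * x p.1.2 - y p.1.2 * x p.1.1 := by
  simp [dotProduct, skewBasis_mulVec_apply, mul_sub, Finset.sum_sub_distrib]

lemma mulVec_dotProduct_skewBasisEntry (x : Fin d → ℝ) (u v w : Fin d) :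
    (fun p => (skewBasis p *ᵥ x) w) ⬝ᵥ skewBasisEntry u v
      = (if w = u then x v else 0) - (if w = v then x u else 0) := by
  rw [dotProduct_skewBasisEntry_eq]
  rcases lt_trichotomy u v with h | rfl | h
  · simp [h, h.not_gt, skewBasis_mulVec_apply]
  · simp
  · simp [h, h.not_gt, skewBasis_mulVec_apply]

end SkewBasis

section PluckerForm

variable {d : ℕ}

lemma cH_eq_sum (H : Matrix (PairIdx d) (PairIdx d) ℝ) (x : Fin d → ℝ) :
    cH H x = ∑ p, ∑ q, H p q • vecMulVec (skewBasis p *ᵥ x) (skewBasis q *ᵥ x) := by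
  simp only [cH, mul_vecMulVec, vecMulVec_mul, vecMul_transpose]

lemma cH_apply (H : Matrix (PairIdx d) (PairIdx d) ℝ) (x : Fin d → ℝ) (s t : Fin d) :
    cH H x s t
      = (fun p => (skewBasis p *ᵥ x) s) ⬝ᵥ H *ᵥ fun q => (skewBasis q *ᵥ x) t := by
  simp only [cH_eq_sum, dotProduct_mulVec_eq_sum, Matrix.sum_apply, Matrix.smul_apply,
    vecMulVec_apply, smul_eq_mul]

lemma dotProduct_cH_mulVec (H : Matrix (PairIdx d) (PairIdx d) ℝ) (x y : Fin d → ℝ) :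
    y ⬝ᵥ cH H x *ᵥ y
      = (fun p => y ⬝ᵥ skewBasis p *ᵥ x) ⬝ᵥ H *ᵥ fun q => y ⬝ᵥ skewBasis q *ᵥ x := by
  simp only [cH_eq_sum, Matrix.sum_mulVec, dotProduct_sum, smul_mulVec, vecMulVec_mulVec,
    op_smul_eq_smul, dotProduct_smul, smul_eq_mul, dotProduct_mulVec_eq_sum H, dotProduct_comm _ y]
  exact Finset.sum_congr rfl fun p _ => Finset.sum_congr rfl fun q _ => by ring

noncomputable def pluckerForm (a b c e : Fin d) : Matrix (PairIdx d) (PairIdx d) ℝ :=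
  symmVecMulVec (skewBasisEntry a b) (skewBasisEntry c e)
    - symmVecMulVec (skewBasisEntry a c) (skewBasisEntry b e)
    + symmVecMulVec (skewBasisEntry a e) (skewBasisEntry b c)

lemma pluckerForm_isSymm (a b c e : Fin d) : (pluckerForm a b c e).IsSymm :=
  ((symmVecMulVec_isSymm _ _).sub (symmVecMulVec_isSymm _ _)).add (symmVecMulVec_isSymm _ _)

lemma cH_pluckerForm (a b c e : Fin d) (x : Fin d → ℝ) : cH (pluckerForm a b c e) x = 0 := by
  ext s t
  simp only [cH_apply, pluckerForm, add_mulVec, sub_mulVec, dotProduct_add, dotProduct_sub,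
    dotProduct_symmVecMulVec_mulVec, mulVec_dotProduct_skewBasisEntry, Matrix.zero_apply]
  split_ifs <;> subst_vars <;> ring

lemma dotProduct_pluckerForm_mulVec {A : Matrix (Fin d) (Fin d) ℝ} (hA : Aᵀ = -A)
    (a b c e : Fin d) :
    (fun p : PairIdx d => A p.1.1 p.1.2) ⬝ᵥ pluckerForm a b c e *ᵥ (fun p => A p.1.1 p.1.2)
      = 2 * (A a b * A c e - A a c * A b e + A a e * A b c) := by
  simp only [pluckerForm, add_mulVec, sub_mulVec, dotProduct_add, dotProduct_sub,
    dotProduct_symmVecMulVec_mulVec, dotProduct_skewBasisEntry hA]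
  ring

end PluckerForm

theorem stmt12_general (d : ℕ)
    (A : Matrix (Fin d) (Fin d) ℝ) (hskew : Aᵀ = -A) (hA : A ≠ 0) :
    A.rank = 2 ↔
      ∀ H : Matrix (PairIdx d) (PairIdx d) ℝ, H.IsSymm → (∀ x, cH H x = 0) →
        (fun p : PairIdx d => A p.1.1 p.1.2) ⬝ᵥ
          H.mulVec (fun p : PairIdx d => A p.1.1 p.1.2) = 0 := by
  obtain ⟨a, b, hab⟩ : ∃ a b, A a b ≠ 0 := by
    by_contra! h
    exact hA (Matrix.ext h)
  constructor
  · intro hrank H _ hK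
    have hA_eq :=
      eq_vecMulVec_sub_of_mul_apply_eq hab (mul_apply_eq_of_rank_le_two hskew hrank.le hab)
    have hz : (fun p : PairIdx d => A p.1.1 p.1.2)
        = fun p => ((A a b)⁻¹ • A a) ⬝ᵥ skewBasis p *ᵥ A b := by
      ext p
      rw [dotProduct_skewBasis_mulVec, congrFun₂ hA_eq]
      simp only [Matrix.sub_apply, vecMulVec_apply]
      ring
    rw [hz, ← dotProduct_cH_mulVec, hK, zero_mulVec, dotProduct_zero]
  · intro hK
    have hplucker (k l : Fin d) : A a b * A k l = A a k * A b l - A b k * A a l := by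
      have h := hK _ (pluckerForm_isSymm a b k l) (cH_pluckerForm a b k l)
      rw [dotProduct_pluckerForm_mulVec hskew] at h
      linear_combination h / 2
    refine le_antisymm ?_ (two_le_rank_of_apply_ne_zero hskew hab)
    rw [eq_vecMulVec_sub_of_mul_apply_eq hab hplucker]
    exact rank_vecMulVec_sub_le_two _ _

/-- A nonzero skew-symmetric matrix `A` has rank 2 if and only if the
vector `z_A` of its strictly upper-triangular entries satisfies `z_Aᵀ H z_A = 0` for every
`H ∈ K = { H ∈ S^m : c_H ≡ 0 }`. -/
theorem stmt12 (d : ℕ) (hd : 1 ≤ d)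
    (A : Matrix (Fin d) (Fin d) ℝ) (hskew : Aᵀ = -A) (hA : A ≠ 0) :
    A.rank = 2 ↔
      ∀ H : Matrix (PairIdx d) (PairIdx d) ℝ, H.IsSymm → (∀ x, cH H x = 0) →
        (fun p : PairIdx d => A p.1.1 p.1.2) ⬝ᵥ
          H.mulVec (fun p : PairIdx d => A p.1.1 p.1.2) = 0 :=
  stmt12_general d A hskew hA
end
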